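/- arXiv:2411.19592 — 2 statements merged into one kernel-verified Lean document; each statement's English description precedes it below -/
import Mathlib

section
/- Let A_0, …, A_n be real numbers with ∑_i A_i = 0, let M_0, …, M_n be strictly positive reals, let p ∈ ℝ⁴, and fix a coordinate index μ. Then the function q ↦ q_μ ∑_i A_i / ((‖q+p‖² + M_i²)(‖q‖² + M_i²)) is Lebesgue integrable on ℝ⁴ and ∫_{ℝ⁴} q_μ ∑_i A_i / ((‖q+p‖² + M_i²)(‖q‖² + M_i²)) dq = π² p_μ ∫_0^1 β ∑_i A_i log(β(1-β)‖p‖² + M_i²) dβ. -/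
/-!
After Feynman parametrization and the shift `q ↦ q + β • p`, the sum of propagator pairs becomes
`∫₀¹ ∑ᵢ Aᵢ (‖q + β • p‖² + Δᵢ(β))⁻² dβ` with `Δᵢ(β) = β (1 - β) ‖p‖² + Mᵢ²`. Because `∑ᵢ Aᵢ = 0`,
this integrand decays like `‖q‖⁻⁶` uniformly in `β`, so Fubini applies; in four dimensions the
radial integral of `(‖k‖² + a)⁻² - (‖k‖² + b)⁻²` is `π² (log b - log a)`, hence the `q`-integral
of the propagator sum is `-π² ∫₀¹ ∑ᵢ Aᵢ log Δᵢ(β) dβ`. The factor `q_μ` is removed by the symmetry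
`q ↦ -(q + p)` of the propagator sum, which gives `∫ q_μ (⋯) = -(p_μ / 2) ∫ (⋯)`, and the symmetry
`β ↦ 1 - β` of `Δᵢ` turns `½ ∫₀¹ (⋯)` into `∫₀¹ β (⋯)`.
-/

open MeasureTheory Real Set Filter Topology Module

theorem integral_inv_sq_convex_combination {X Y : ℝ} (hX : 0 < X) (hY : 0 < Y) :
    ∫ β in (0:ℝ)..1, ((β * X + (1 - β) * Y) ^ 2)⁻¹ = (X * Y)⁻¹ := by
  have hpos : ∀ β ∈ uIcc (0:ℝ) 1, 0 < β * X + (1 - β) * Y := by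
    intro β hβ
    rw [uIcc_of_le zero_le_one] at hβ
    nlinarith [mul_nonneg hβ.1 hX.le, mul_nonneg (sub_nonneg.2 hβ.2) hY.le, hβ.1, hβ.2]
  have hderiv : ∀ β ∈ uIcc (0:ℝ) 1, HasDerivAt (fun β => β / (Y * (β * X + (1 - β) * Y)))
      (((β * X + (1 - β) * Y) ^ 2)⁻¹) β := by
    intro β hβ
    have hD : HasDerivAt (fun β : ℝ => Y * (β * X + (1 - β) * Y)) (Y * (X - Y)) β :=
      ((((hasDerivAt_id' β).mul_const X).add
        (((hasDerivAt_id' β).const_sub 1).mul_const Y)).const_mul Y).congr_deriv (by ring)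
    refine ((hasDerivAt_id' β).div hD (mul_ne_zero hY.ne' (hpos β hβ).ne')).congr_deriv ?_
    field_simp
    ring
  rw [intervalIntegral.integral_eq_sub_of_hasDerivAt hderiv (ContinuousOn.intervalIntegrable
    (ContinuousOn.inv₀ (by fun_prop) fun β hβ => (pow_pos (hpos β hβ) 2).ne'))]
  field_simp
  ring

theorem integral_id_mul_of_comp_one_sub_eq {f : ℝ → ℝ} (hf : ∀ β, f (1 - β) = f β)
    (hfi : IntervalIntegrable f volume 0 1) :
    ∫ β in (0:ℝ)..1, β * f β = (∫ β in (0:ℝ)..1, f β) / 2 := by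
  have hrefl : ∫ β in (0:ℝ)..1, (1 - β) * f β = ∫ β in (0:ℝ)..1, β * f β := by
    simpa [hf] using
      intervalIntegral.integral_comp_sub_left (a := 0) (b := 1) (fun β => β * f β) 1
  rw [intervalIntegral.integral_congr (g := fun β => f β - β * f β) (fun β _ => by ring),
    intervalIntegral.integral_sub hfi
      (hfi.continuousOn_mul continuousOn_id : IntervalIntegrable (fun β => β * f β) volume 0 1)]
    at hrefl
  linarith

theorem mul_one_sub_mul_nonneg {β s : ℝ} (hβ : β ∈ Icc (0:ℝ) 1) (hs : 0 ≤ s) :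
    0 ≤ β * (1 - β) * s :=
  mul_nonneg (mul_nonneg hβ.1 (sub_nonneg.2 hβ.2)) hs

theorem sum_mul_eq_sum_mul_sub_of_sum_eq_zero {ι : Type*} [Fintype ι] {A : ι → ℝ}
    (hA : ∑ i, A i = 0) (g : ι → ℝ) (x : ℝ) : ∑ i, A i * g i = ∑ i, A i * (g i - x) := by
  simp only [mul_sub, Finset.sum_sub_distrib, ← Finset.sum_mul, hA, zero_mul, sub_zero]

theorem abs_inv_sq_sub_inv_sq_le {a b c C t : ℝ} (hc : 0 < c) (hca : c ≤ a) (hcb : c ≤ b)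
    (haC : a ≤ C) (hbC : b ≤ C) (ht : 0 ≤ t) :
    |((t + a) ^ 2)⁻¹ - ((t + b) ^ 2)⁻¹| ≤ 2 * C ^ 2 / c * ((t + c) ^ 3)⁻¹ := by
  have htc : 0 < t + c := by linarith
  have hsum : 2 * t + a + b ≤ 2 * C / c * (t + c) := by
    rw [div_mul_eq_mul_div, le_div_iff₀ hc]
    nlinarith
  have hnum : |(t + b) ^ 2 - (t + a) ^ 2| ≤ 2 * C ^ 2 / c * (t + c) := by
    rw [show (t + b) ^ 2 - (t + a) ^ 2 = (b - a) * (2 * t + a + b) by ring, abs_mul,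
      abs_of_pos (by linarith : 0 < 2 * t + a + b)]
    calc |b - a| * (2 * t + a + b) ≤ C * (2 * C / c * (t + c)) :=
          mul_le_mul (abs_le.2 ⟨by linarith, by linarith⟩) hsum (by linarith) (by linarith)
      _ = 2 * C ^ 2 / c * (t + c) := by ring
  have hden : (t + c) ^ 4 ≤ (t + a) ^ 2 * (t + b) ^ 2 := by
    calc (t + c) ^ 4 = (t + c) ^ 2 * (t + c) ^ 2 := by ring
      _ ≤ (t + a) ^ 2 * (t + b) ^ 2 := by gcongr
  have hta : 0 < t + a := by linarith
  have htb : 0 < t + b := by linarith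
  rw [inv_sub_inv (by positivity) (by positivity), abs_div,
    abs_of_pos (by positivity : (0:ℝ) < (t + a) ^ 2 * (t + b) ^ 2)]
  calc _ ≤ 2 * C ^ 2 / c * (t + c) / (t + c) ^ 4 :=
        div_le_div₀ (by positivity) hnum (by positivity) hden
    _ = 2 * C ^ 2 / c * ((t + c) ^ 3)⁻¹ := by field_simp

theorem one_add_norm_sq_le_mul_norm_add_sq_add {E : Type*} [SeminormedAddCommGroup E] (q : E)
    {v : E} {R c : ℝ} (hv : ‖v‖ ≤ R) (hc : 0 < c) :
    (1 + ‖q‖) ^ 2 ≤ (2 * (1 + R) ^ 2 / c + 2) * (‖q + v‖ ^ 2 + c) := by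
  have htri : 1 + ‖q‖ ≤ (1 + R) + ‖q + v‖ := by
    have := norm_sub_le (q + v) v
    rw [add_sub_cancel_right] at this
    linarith
  have hR : 0 ≤ 1 + R := by linarith [norm_nonneg v]
  have hcoef : 2 * (1 + R) ^ 2 ≤ 2 * (1 + R) ^ 2 / c * (‖q + v‖ ^ 2 + c) := by
    rw [div_mul_eq_mul_div, le_div_iff₀ hc]
    nlinarith [sq_nonneg ‖q + v‖, sq_nonneg (1 + R)]
  nlinarith [sq_nonneg ((1 + R) - ‖q + v‖), norm_nonneg q, pow_le_pow_left₀ (by positivity) htri 2]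

theorem exists_abs_inv_sq_norm_add_sq_sub_le {E : Type*} [SeminormedAddCommGroup E] {c C R : ℝ}
    (hc : 0 < c) :
    ∃ K, ∀ a b, c ≤ a → c ≤ b → a ≤ C → b ≤ C → ∀ q v : E, ‖v‖ ≤ R →
      |((‖q + v‖ ^ 2 + a) ^ 2)⁻¹ - ((‖q + v‖ ^ 2 + b) ^ 2)⁻¹| ≤ K * ((1 + ‖q‖) ^ 6)⁻¹ := by
  set K₀ := 2 * (1 + R) ^ 2 / c + 2
  refine ⟨2 * C ^ 2 / c * K₀ ^ 3, fun a b hca hcb haC hbC q v hv => ?_⟩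
  have hdecay : ((‖q + v‖ ^ 2 + c) ^ 3)⁻¹ ≤ K₀ ^ 3 * ((1 + ‖q‖) ^ 6)⁻¹ := by
    have h := pow_le_pow_left₀ (by positivity) (one_add_norm_sq_le_mul_norm_add_sq_add q hv hc) 3
    rw [← pow_mul, mul_pow] at h
    have hK₀ : 0 < K₀ := by positivity
    calc ((‖q + v‖ ^ 2 + c) ^ 3)⁻¹ = K₀ ^ 3 * (K₀ ^ 3 * (‖q + v‖ ^ 2 + c) ^ 3)⁻¹ := by
          field_simp
      _ ≤ K₀ ^ 3 * ((1 + ‖q‖) ^ 6)⁻¹ := by gcongr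
  calc _ ≤ 2 * C ^ 2 / c * ((‖q + v‖ ^ 2 + c) ^ 3)⁻¹ :=
        abs_inv_sq_sub_inv_sq_le hc hca hcb haC hbC (by positivity)
    _ ≤ 2 * C ^ 2 / c * (K₀ ^ 3 * ((1 + ‖q‖) ^ 6)⁻¹) := by gcongr
    _ = _ := by ring

theorem norm_add_smul_sq_add_mul_one_sub {E : Type*} [NormedAddCommGroup E]
    [InnerProductSpace ℝ E] (q p : E) (β : ℝ) :
    ‖q + β • p‖ ^ 2 + β * (1 - β) * ‖p‖ ^ 2 = β * ‖q + p‖ ^ 2 + (1 - β) * ‖q‖ ^ 2 := by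
  rw [norm_add_sq_real, norm_add_sq_real, real_inner_smul_right, norm_smul, Real.norm_eq_abs,
    mul_pow, sq_abs]
  ring

theorem hasDerivAt_log_sq_add_add_div {a : ℝ} (ha : 0 < a) (r : ℝ) :
    HasDerivAt (fun r => (log (r ^ 2 + a) + a / (r ^ 2 + a)) / 2)
      (r ^ 3 * ((r ^ 2 + a) ^ 2)⁻¹) r := by
  have hpos : 0 < r ^ 2 + a := by positivity
  have hsq : HasDerivAt (fun r : ℝ => r ^ 2 + a) (2 * r) r := by
    simpa using (hasDerivAt_pow 2 r).add_const a
  refine (((hsq.log hpos.ne').add ((hasDerivAt_const r a).div hsq hpos.ne')).div_const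
    2).congr_deriv ?_
  field_simp
  ring

theorem integral_Ioi_pow_three_mul_inv_sq_sub {a b : ℝ} (ha : 0 < a) (hb : 0 < b)
    (hint : IntegrableOn (fun r => r ^ 3 * (((r ^ 2 + a) ^ 2)⁻¹ - ((r ^ 2 + b) ^ 2)⁻¹)) (Ioi 0)) :
    ∫ r in Ioi (0:ℝ), r ^ 3 * (((r ^ 2 + a) ^ 2)⁻¹ - ((r ^ 2 + b) ^ 2)⁻¹) =
      (log b - log a) / 2 := by
  have hderiv : ∀ r ∈ Ici (0:ℝ), HasDerivAt
      (fun r => (log (r ^ 2 + a) + a / (r ^ 2 + a)) / 2 - (log (r ^ 2 + b) + b / (r ^ 2 + b)) / 2)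
      (r ^ 3 * (((r ^ 2 + a) ^ 2)⁻¹ - ((r ^ 2 + b) ^ 2)⁻¹)) r := fun r _ =>
    ((hasDerivAt_log_sq_add_add_div ha r).sub (hasDerivAt_log_sq_add_add_div hb r)).congr_deriv
      (by ring)
  have hsq : Tendsto (fun r : ℝ => r ^ 2) atTop atTop := tendsto_pow_atTop two_ne_zero
  have hlog (a : ℝ) : Tendsto (fun r : ℝ => log (r ^ 2 + a) - log (r ^ 2)) atTop (𝓝 0) :=
    (tendsto_log_comp_add_sub_log a).comp hsq
  have hfrac (a : ℝ) : Tendsto (fun r : ℝ => a / (r ^ 2 + a)) atTop (𝓝 0) :=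
    tendsto_const_nhds.div_atTop (tendsto_atTop_add_const_right _ a hsq)
  have hlim : Tendsto
      (fun r => (log (r ^ 2 + a) + a / (r ^ 2 + a)) / 2 - (log (r ^ 2 + b) + b / (r ^ 2 + b)) / 2)
      atTop (𝓝 0) := by
    convert ((((hlog a).sub (hlog b)).add ((hfrac a).sub (hfrac b))).div_const 2) using 2
    · ring
    · simp
  rw [integral_Ioi_of_hasDerivAt_of_tendsto' hderiv hint hlim]
  simp only [ne_eq, OfNat.ofNat_ne_zero, not_false_eq_true, zero_pow, zero_add]
  rw [div_self ha.ne', div_self hb.ne']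
  ring

theorem integral_mul_eq_of_comp_neg_add_eq {G : Type*} [AddGroup G] [MeasurableSpace G]
    [MeasurableAdd G] [MeasurableNeg G] (μ : Measure G) [μ.IsAddRightInvariant]
    [μ.IsNegInvariant] {F : Type*} [FunLike F G ℝ] [AddMonoidHomClass F G ℝ] (ℓ : F)
    {f : G → ℝ} (p : G) (hf : ∀ q, f (-(q + p)) = f q) (hfi : Integrable f μ)
    (hℓfi : Integrable (fun q => ℓ q * f q) μ) :
    ∫ q, ℓ q * f q ∂μ = -(ℓ p / 2 * ∫ q, f q ∂μ) := by
  have hrefl : ∫ q, ℓ q * f q ∂μ = ∫ q, ℓ (-(q + p)) * f (-(q + p)) ∂μ := by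
    rw [integral_add_right_eq_self (fun q => ℓ (-q) * f (-q)) p,
      integral_neg_eq_self (fun q => ℓ q * f q)]
  simp only [hf, map_neg, map_add, neg_add, add_mul, neg_mul] at hrefl
  rw [integral_add (f := fun q => -(ℓ q * f q)) (g := fun q => -(ℓ p * f q)) hℓfi.neg
    (hfi.const_mul _).neg, integral_neg, integral_neg, integral_const_mul] at hrefl
  linarith

section FiniteDimensional

variable {E : Type*} [NormedAddCommGroup E] [NormedSpace ℝ E] [FiniteDimensional ℝ E]
  [MeasurableSpace E] [BorelSpace E] {μ : Measure E} [μ.IsAddHaarMeasure]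

theorem integrable_inv_one_add_norm_pow {n : ℕ} (hn : finrank ℝ E < n) :
    Integrable (fun x : E => ((1 + ‖x‖) ^ n)⁻¹) μ :=
  (integrable_one_add_norm (r := n) (by exact_mod_cast hn)).congr
    (.of_forall fun x => by simp only [rpow_neg (by positivity : (0:ℝ) ≤ 1 + ‖x‖), rpow_natCast])

theorem integrable_of_norm_le_inv_one_add_norm_pow {F : Type*} [NormedAddCommGroup F]
    {f : E → F} {n : ℕ} {C : ℝ} (hn : finrank ℝ E < n) (hf : AEStronglyMeasurable f μ)
    (hbound : ∀ x, ‖f x‖ ≤ C * ((1 + ‖x‖) ^ n)⁻¹) : Integrable f μ :=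
  ((integrable_inv_one_add_norm_pow hn).const_mul C).mono' hf (.of_forall hbound)

end FiniteDimensional

section InnerProductSpace

variable {E : Type*} [NormedAddCommGroup E] [InnerProductSpace ℝ E] [FiniteDimensional ℝ E]
  [MeasurableSpace E] [BorelSpace E]

theorem integrable_inv_sq_norm_sq_add_sub (hE : finrank ℝ E < 6) {a b : ℝ} (ha : 0 < a)
    (hb : 0 < b) : Integrable (fun k : E => ((‖k‖ ^ 2 + a) ^ 2)⁻¹ - ((‖k‖ ^ 2 + b) ^ 2)⁻¹) := by
  obtain ⟨K, hK⟩ := exists_abs_inv_sq_norm_add_sq_sub_le (E := E) (C := max a b) (R := 0)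
    (lt_min ha hb)
  refine integrable_of_norm_le_inv_one_add_norm_pow (C := K) hE
    (by fun_prop : Measurable _).aestronglyMeasurable fun k => ?_
  simpa using hK a b (min_le_left _ _) (min_le_right _ _) (le_max_left _ _) (le_max_right _ _)
    k 0 (by simp)

theorem integral_inv_sq_norm_sq_add_sub (hE : finrank ℝ E = 4) {a b : ℝ} (ha : 0 < a)
    (hb : 0 < b) :
    ∫ k : E, (((‖k‖ ^ 2 + a) ^ 2)⁻¹ - ((‖k‖ ^ 2 + b) ^ 2)⁻¹) = π ^ 2 * (log b - log a) := by
  have : Nontrivial E := Module.nontrivial_of_finrank_eq_succ hE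
  have hrad := (integrable_fun_norm_addHaar (volume : Measure E)
    (f := fun t => ((t ^ 2 + a) ^ 2)⁻¹ - ((t ^ 2 + b) ^ 2)⁻¹)).1
    (integrable_inv_sq_norm_sq_add_sub (by omega) ha hb)
  rw [integral_fun_norm_addHaar (volume : Measure E)
    (fun t => ((t ^ 2 + a) ^ 2)⁻¹ - ((t ^ 2 + b) ^ 2)⁻¹)]
  simp only [hE, smul_eq_mul] at hrad ⊢
  rw [integral_Ioi_pow_three_mul_inv_sq_sub ha hb hrad, measureReal_def,
    InnerProductSpace.volume_ball_of_dim_even (k := 2) hE]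
  norm_num
  rw [ENNReal.toReal_ofReal (by positivity)]
  ring

theorem integral_sum_mul_inv_sq_norm_add_sq_add {ι : Type*} [Fintype ι] (hE : finrank ℝ E = 4)
    {A Δ : ι → ℝ} (hA : ∑ i, A i = 0) (hΔ : ∀ i, 0 < Δ i) (v : E) :
    ∫ q : E, ∑ i, A i * ((‖q + v‖ ^ 2 + Δ i) ^ 2)⁻¹ = -(π ^ 2 * ∑ i, A i * log (Δ i)) := by
  rw [integral_add_right_eq_self (fun q : E => ∑ i, A i * ((‖q‖ ^ 2 + Δ i) ^ 2)⁻¹) v]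
  have hsplit : (fun q : E => ∑ i, A i * ((‖q‖ ^ 2 + Δ i) ^ 2)⁻¹) =
      fun q => ∑ i, A i * (((‖q‖ ^ 2 + Δ i) ^ 2)⁻¹ - ((‖q‖ ^ 2 + 1) ^ 2)⁻¹) :=
    funext fun q => sum_mul_eq_sum_mul_sub_of_sum_eq_zero hA _ _
  rw [hsplit, integral_finsetSum _ fun i _ =>
    (integrable_inv_sq_norm_sq_add_sub (by omega) (hΔ i) one_pos).const_mul (A i)]
  simp_rw [integral_const_mul, integral_inv_sq_norm_sq_add_sub hE (hΔ _) one_pos, log_one,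
    Finset.mul_sum]
  rw [← Finset.sum_neg_distrib]
  exact Finset.sum_congr rfl fun i _ => by ring

end InnerProductSpace

namespace PauliVillars

variable {ι E : Type*} [Fintype ι] [NormedAddCommGroup E]

/- `m i` stands for the squared mass `M i ^ 2`. -/

noncomputable def bubble (A m : ι → ℝ) (p q : E) : ℝ :=
  ∑ i, A i / ((‖q + p‖ ^ 2 + m i) * (‖q‖ ^ 2 + m i))

noncomputable def feynmanBubble [NormedSpace ℝ E] (A m : ι → ℝ) (p : E) (β : ℝ) (q : E) : ℝ :=
  ∑ i, A i * ((‖q + β • p‖ ^ 2 + (β * (1 - β) * ‖p‖ ^ 2 + m i)) ^ 2)⁻¹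

noncomputable def bubbleLog (A m : ι → ℝ) (s β : ℝ) : ℝ :=
  ∑ i, A i * log (β * (1 - β) * s + m i)

variable {A m : ι → ℝ}

theorem bubble_neg_add (p q : E) : bubble A m p (-(q + p)) = bubble A m p q := by
  unfold bubble
  refine Finset.sum_congr rfl fun i _ => ?_
  rw [show -(q + p) + p = -q by abel, norm_neg, norm_neg, mul_comm]

theorem bubbleLog_one_sub (s β : ℝ) : bubbleLog A m s (1 - β) = bubbleLog A m s β := by
  unfold bubbleLog
  ring_nf

theorem intervalIntegrable_bubbleLog (hm : ∀ i, 0 < m i) {s : ℝ} (hs : 0 ≤ s) :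
    IntervalIntegrable (bubbleLog A m s) volume 0 1 := by
  refine ContinuousOn.intervalIntegrable (continuousOn_finsetSum _ fun i _ => ?_)
  refine continuousOn_const.mul (ContinuousOn.log (by fun_prop) fun β hβ => ?_)
  rw [uIcc_of_le zero_le_one] at hβ
  exact (add_pos_of_nonneg_of_pos (mul_one_sub_mul_nonneg hβ hs) (hm i)).ne'

theorem exists_abs_feynmanBubble_le [NormedSpace ℝ E] (hA : ∑ i, A i = 0) (hm : ∀ i, 0 < m i)
    (p : E) :
    ∃ K, ∀ β ∈ Icc (0:ℝ) 1, ∀ q : E, |feynmanBubble A m p β q| ≤ K * ((1 + ‖q‖) ^ 6)⁻¹ := by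
  -- since `∑ i, A i = 0`, each term may be measured against the mass-one term
  have hterm (i : ι) : ∃ K, ∀ β ∈ Icc (0:ℝ) 1, ∀ q : E,
      |((‖q + β • p‖ ^ 2 + (β * (1 - β) * ‖p‖ ^ 2 + m i)) ^ 2)⁻¹ - ((‖q + β • p‖ ^ 2 + 1) ^ 2)⁻¹|
        ≤ K * ((1 + ‖q‖) ^ 6)⁻¹ := by
    obtain ⟨K, hK⟩ := exists_abs_inv_sq_norm_add_sq_sub_le (E := E) (C := m i + ‖p‖ ^ 2 + 1)
      (R := ‖p‖) (lt_min (hm i) one_pos)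
    refine ⟨K, fun β hβ q => hK _ _ ?_ (min_le_right _ _) ?_ ?_ q _ ?_⟩
    · linarith [min_le_left (m i) 1, mul_one_sub_mul_nonneg hβ (sq_nonneg ‖p‖)]
    · have hβ1 : β * (1 - β) ≤ 1 := by nlinarith [hβ.1, hβ.2]
      nlinarith [mul_le_mul_of_nonneg_right hβ1 (sq_nonneg ‖p‖)]
    · nlinarith [hm i, sq_nonneg ‖p‖]
    · rw [norm_smul, Real.norm_eq_abs, abs_of_nonneg hβ.1]
      exact mul_le_of_le_one_left (norm_nonneg p) hβ.2
  choose K hK using hterm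
  refine ⟨∑ i, |A i| * K i, fun β hβ q => ?_⟩
  unfold feynmanBubble
  rw [sum_mul_eq_sum_mul_sub_of_sum_eq_zero hA _ ((‖q + β • p‖ ^ 2 + 1) ^ 2)⁻¹, Finset.sum_mul]
  refine (Finset.abs_sum_le_sum_abs _ _).trans (Finset.sum_le_sum fun i _ => ?_)
  rw [abs_mul, mul_assoc (|A i|)]
  exact mul_le_mul_of_nonneg_left (hK i β hβ q) (abs_nonneg _)

variable [InnerProductSpace ℝ E]

theorem bubble_eq_integral_feynmanBubble (hm : ∀ i, 0 < m i) (p q : E) :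
    bubble A m p q = ∫ β in (0:ℝ)..1, feynmanBubble A m p β q := by
  have hterm (i : ι) :
      ∫ β in (0:ℝ)..1, ((‖q + β • p‖ ^ 2 + (β * (1 - β) * ‖p‖ ^ 2 + m i)) ^ 2)⁻¹ =
        ((‖q + p‖ ^ 2 + m i) * (‖q‖ ^ 2 + m i))⁻¹ := by
    rw [← integral_inv_sq_convex_combination (by positivity [hm i]) (by positivity [hm i])]
    refine intervalIntegral.integral_congr fun β _ => ?_
    congr 2
    linear_combination norm_add_smul_sq_add_mul_one_sub q p β
  unfold bubble feynmanBubble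
  rw [intervalIntegral.integral_finsetSum fun i _ =>
    (intervalIntegral.intervalIntegrable_of_integral_ne_zero
      (by rw [hterm i]; have := hm i; positivity)).const_mul (A i)]
  refine Finset.sum_congr rfl fun i _ => ?_
  rw [intervalIntegral.integral_const_mul, hterm i, div_eq_mul_inv]

theorem exists_abs_bubble_le (hA : ∑ i, A i = 0) (hm : ∀ i, 0 < m i) (p : E) :
    ∃ K, ∀ q : E, |bubble A m p q| ≤ K * ((1 + ‖q‖) ^ 6)⁻¹ := by
  obtain ⟨K, hK⟩ := exists_abs_feynmanBubble_le hA hm p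
  refine ⟨K, fun q => ?_⟩
  rw [bubble_eq_integral_feynmanBubble hm]
  simpa using intervalIntegral.norm_integral_le_of_norm_le_const (a := 0) (b := 1)
    (f := fun β => feynmanBubble A m p β q) fun β hβ =>
      (hK β (Ioc_subset_Icc_self (by rwa [uIoc_of_le zero_le_one] at hβ)) q)

section FiniteDimensional

variable [FiniteDimensional ℝ E] [MeasurableSpace E] [BorelSpace E]

theorem integrable_bubble (hE : finrank ℝ E < 6) (hA : ∑ i, A i = 0) (hm : ∀ i, 0 < m i)
    (p : E) : Integrable (bubble A m p) := by
  obtain ⟨K, hK⟩ := exists_abs_bubble_le hA hm p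
  exact integrable_of_norm_le_inv_one_add_norm_pow hE
    (by unfold bubble; fun_prop : Measurable _).aestronglyMeasurable hK

theorem integrable_mul_bubble (hE : finrank ℝ E < 5) (hA : ∑ i, A i = 0) (hm : ∀ i, 0 < m i)
    (p : E) (ℓ : E →L[ℝ] ℝ) : Integrable fun q => ℓ q * bubble A m p q := by
  obtain ⟨K, hK⟩ := exists_abs_bubble_le hA hm p
  refine integrable_of_norm_le_inv_one_add_norm_pow (C := ‖ℓ‖ * K) hE
    (by unfold bubble; fun_prop : Measurable _).aestronglyMeasurable fun q => ?_
  have hℓ : ‖ℓ q‖ ≤ ‖ℓ‖ * (1 + ‖q‖) := (ℓ.le_opNorm q).trans (by gcongr; linarith)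
  rw [norm_mul, Real.norm_eq_abs (bubble A m p q)]
  calc ‖ℓ q‖ * |bubble A m p q| ≤ ‖ℓ‖ * (1 + ‖q‖) * (K * ((1 + ‖q‖) ^ 6)⁻¹) :=
        mul_le_mul hℓ (hK q) (abs_nonneg _) (by positivity)
    _ = ‖ℓ‖ * K * ((1 + ‖q‖) ^ 5)⁻¹ := by field_simp

theorem integral_bubble (hE : finrank ℝ E = 4) (hA : ∑ i, A i = 0) (hm : ∀ i, 0 < m i)
    (p : E) : ∫ q, bubble A m p q = -(π ^ 2 * ∫ β in (0:ℝ)..1, bubbleLog A m (‖p‖ ^ 2) β) := by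
  obtain ⟨K, hK⟩ := exists_abs_feynmanBubble_le hA hm p
  let ν := (volume : Measure ℝ).restrict (Ioc 0 1)
  have hprod : Integrable (Function.uncurry fun (q : E) β => feynmanBubble A m p β q)
      ((volume : Measure E).prod ν) := by
    refine (((integrable_inv_one_add_norm_pow (n := 6) (by omega)).const_mul K).comp_fst
      ν).mono' (by unfold feynmanBubble; fun_prop : Measurable _).aestronglyMeasurable ?_
    filter_upwards [Measure.quasiMeasurePreserving_snd.ae (ae_restrict_mem measurableSet_Ioc)]
      with z hz
    exact hK z.2 (Ioc_subset_Icc_self hz) z.1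
  calc ∫ q, bubble A m p q = ∫ q, (∫ β, feynmanBubble A m p β q ∂ν) := by
        simp_rw [bubble_eq_integral_feynmanBubble hm, intervalIntegral.integral_of_le zero_le_one]
        rfl
    _ = ∫ β, (∫ q, feynmanBubble A m p β q) ∂ν := integral_integral_swap hprod
    _ = ∫ β in Ioc 0 1, -(π ^ 2 * bubbleLog A m (‖p‖ ^ 2) β) :=
        setIntegral_congr_fun measurableSet_Ioc fun β hβ =>
          integral_sum_mul_inv_sq_norm_add_sq_add hE hA (fun i => add_pos_of_nonneg_of_pos
            (mul_one_sub_mul_nonneg (Ioc_subset_Icc_self hβ) (sq_nonneg _)) (hm i)) (β • p)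
    _ = -(π ^ 2 * ∫ β in (0:ℝ)..1, bubbleLog A m (‖p‖ ^ 2) β) := by
        rw [integral_neg, integral_const_mul, intervalIntegral.integral_of_le zero_le_one]

end FiniteDimensional

end PauliVillars

open PauliVillars in
/-- Identity (int-q3): the two-propagator Pauli–Villars integral with one
momentum factor, in Feynman parametrization. -/
theorem integral_pauliVillars_two_propagators_coord (n : ℕ) (A M : Fin (n + 1) → ℝ)
    (hM : ∀ i, 0 < M i) (hA : ∑ i, A i = 0) (p : EuclideanSpace ℝ (Fin 4))
    (μ : Fin 4) :
    Integrable (fun q : EuclideanSpace ℝ (Fin 4) =>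
      q μ * ∑ i, A i / ((‖q + p‖ ^ 2 + M i ^ 2) * (‖q‖ ^ 2 + M i ^ 2))) ∧
    ∫ q : EuclideanSpace ℝ (Fin 4),
        q μ * ∑ i, A i / ((‖q + p‖ ^ 2 + M i ^ 2) * (‖q‖ ^ 2 + M i ^ 2)) =
      π ^ 2 * p μ * ∫ β in (0 : ℝ)..1,
        β * ∑ i, A i * Real.log (β * (1 - β) * ‖p‖ ^ 2 + M i ^ 2) := by
  have hm : ∀ i, 0 < M i ^ 2 := fun i => pow_pos (hM i) 2
  have hE : finrank ℝ (EuclideanSpace ℝ (Fin 4)) = 4 := finrank_euclideanSpace_fin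
  have hcoord := integrable_mul_bubble (by omega) hA hm p (EuclideanSpace.proj μ)
  refine ⟨hcoord, ?_⟩
  show ∫ q, EuclideanSpace.proj μ q * bubble A (fun i => M i ^ 2) p q =
    π ^ 2 * EuclideanSpace.proj μ p *
      ∫ β in (0:ℝ)..1, β * bubbleLog A (fun i => M i ^ 2) (‖p‖ ^ 2) β
  rw [integral_mul_eq_of_comp_neg_add_eq volume (EuclideanSpace.proj μ) p (bubble_neg_add p)
      (integrable_bubble (by omega) hA hm p) hcoord,
    integral_bubble hE hA hm p, integral_id_mul_of_comp_one_sub_eq (bubbleLog_one_sub _)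
      (intervalIntegrable_bubbleLog hm (sq_nonneg _))]
  ring
end

section
/- Let M > 0, k, p ∈ ℝ⁴, and fix a coordinate index μ. Then q ↦ q_μ/((‖q‖²+M²)(‖q-k‖²+M²)(‖q+p‖²+M²)) is Lebesgue integrable on ℝ⁴ and ∫_{ℝ⁴} q_μ dq / ((‖q‖²+M²)(‖q-k‖²+M²)(‖q+p‖²+M²)) = π² ∫_0^1 dβ₁ ∫_0^{1-β₁} dβ₂ of (β₂k - β₃p)_μ/(β₁β₂‖k‖² + β₁β₃‖p‖² + β₂β₃‖k+p‖² + M²) with β₃ = 1-β₁-β₂. -/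
/-!
Feynman parametrization, `1 / (A B C) = ∫_T 2 / (x A + y B + (1 - x - y) C) ^ 3` over the
triangle `T = {x, y > 0, x + y < 1}`, merges the three propagators into one; completing the
square turns the merged denominator into `‖q - c‖² + Δ` with `c = β₂ k - β₃ p` and `Δ` the
denominator of the right-hand side. After the shift `q ↦ q + c` the odd part integrates to zero,
and in dimension four `∫ 1 / (‖q‖² + Δ) ^ 3 = π² / (2 Δ)`. Fubini applies because on `T` the
merged integrand is `O((1 + ‖q‖) ^ (-5))` uniformly (`‖c‖ ≤ ‖k‖ + ‖p‖` and `Δ ≥ M²`), which is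
integrable in dimension four.
-/

open MeasureTheory Real Set Filter Topology Module

section Feynman

variable {A B C : ℝ}

/-- This antiderivative stays regular at `d = 0`, so no case split on `d` is needed. -/
lemma hasDerivAt_div_affine_sq {c d y : ℝ} (hc : c ≠ 0) (hy : c + y * d ≠ 0) :
    HasDerivAt (fun y => y * (2 * c + y * d) / (c ^ 2 * (c + y * d) ^ 2))
      (2 / (c + y * d) ^ 3) y := by
  have hl : HasDerivAt (fun y => c + y * d) d y := by
    simpa using (hasDerivAt_mul_const d).const_add c
  have hn : HasDerivAt (fun y => y * (2 * c + y * d)) (2 * c + y * d + y * d) y := by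
    simpa using (hasDerivAt_id' y).fun_mul ((hasDerivAt_mul_const d).const_add (2 * c))
  refine (hn.fun_div ((hl.fun_pow 2).const_mul (c ^ 2)) (by simp [hc, hy])).congr_deriv ?_
  field_simp
  ring

lemma integral_two_div_affine_cube {c d L : ℝ} (hL : 0 ≤ L)
    (hpos : ∀ y ∈ Icc 0 L, 0 < c + y * d) :
    ∫ y in 0..L, 2 / (c + y * d) ^ 3 = L * (2 * c + L * d) / (c ^ 2 * (c + L * d) ^ 2) := by
  have hpos' : ∀ y ∈ uIcc 0 L, c + y * d ≠ 0 := fun y hy =>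
    (hpos y (by rwa [uIcc_of_le hL] at hy)).ne'
  have hc : c ≠ 0 := by simpa using hpos' 0 left_mem_uIcc
  rw [intervalIntegral.integral_eq_sub_of_hasDerivAt
    (fun y hy => hasDerivAt_div_affine_sq hc (hpos' y hy))
    (ContinuousOn.intervalIntegrable (by
      refine continuousOn_const.div (by fun_prop) fun y hy => pow_ne_zero 3 (hpos' y hy)))]
  simp

lemma add_mul_add_mul_pos {x y : ℝ} (hA : 0 < A) (hB : 0 < B) (hC : 0 < C)
    (hx : 0 ≤ x) (hy : 0 ≤ y) (hxy : x + y ≤ 1) : 0 < x * A + y * B + (1 - x - y) * C := by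
  have hm : 0 < min A (min B C) := lt_min hA (lt_min hB hC)
  nlinarith [mul_le_mul_of_nonneg_left (min_le_left A (min B C)) hx,
    mul_le_mul_of_nonneg_left ((min_le_right A _).trans (min_le_left B C)) hy,
    mul_le_mul_of_nonneg_left ((min_le_right A _).trans (min_le_right B C))
      (by linarith : 0 ≤ 1 - x - y)]

/-- The antiderivative vanishes at `x = 0` and equals `1 / (A B C)` at `x = 1`. -/
lemma hasDerivAt_feynman_outer {x : ℝ} (hB : B ≠ 0) (hC : C ≠ 0)
    (hu : x * A + (1 - x) * B ≠ 0) (hv : x * A + (1 - x) * C ≠ 0) :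
    HasDerivAt
      (fun x => x * (x * A + (1 - x) * (B + C)) /
        (B * C * (x * A + (1 - x) * B) * (x * A + (1 - x) * C)))
      ((1 - x) * ((x * A + (1 - x) * B) + (x * A + (1 - x) * C)) /
        ((x * A + (1 - x) * B) ^ 2 * (x * A + (1 - x) * C) ^ 2)) x := by
  have hl : ∀ D : ℝ, HasDerivAt (fun x => x * A + (1 - x) * D) (A - D) x := fun D => by
    refine (((hasDerivAt_id' x).mul_const A).fun_add
      (((hasDerivAt_id' x).const_sub 1).mul_const D)).congr_deriv (by ring)
  have hn : HasDerivAt (fun x => x * (x * A + (1 - x) * (B + C)))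
      (x * A + (1 - x) * (B + C) + x * (A - (B + C))) x := by
    refine ((hasDerivAt_id' x).fun_mul (hl (B + C))).congr_deriv (by ring)
  refine (hn.fun_div (((hl B).const_mul (B * C)).fun_mul (hl C)) (by simp [*])).congr_deriv ?_
  field_simp
  ring

lemma integral_feynman_three (hA : 0 < A) (hB : 0 < B) (hC : 0 < C) :
    ∫ x in 0..1, ∫ y in 0..(1 - x), 2 / (x * A + y * B + (1 - x - y) * C) ^ 3 =
      1 / (A * B * C) := by
  have hpos : ∀ x ∈ uIcc (0 : ℝ) 1, 0 < x * A + (1 - x) * B ∧ 0 < x * A + (1 - x) * C := by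
    intro x hx
    rw [uIcc_of_le zero_le_one] at hx
    constructor
    · convert add_mul_add_mul_pos hA hB hC hx.1 (sub_nonneg.2 hx.2) (by linarith) using 1; ring
    · convert add_mul_add_mul_pos hA hB hC hx.1 le_rfl (by linarith [hx.2]) using 1; ring
  have hinner : ∀ x ∈ uIcc (0 : ℝ) 1,
      ∫ y in 0..(1 - x), 2 / (x * A + y * B + (1 - x - y) * C) ^ 3 =
        (1 - x) * ((x * A + (1 - x) * B) + (x * A + (1 - x) * C)) /
          ((x * A + (1 - x) * B) ^ 2 * (x * A + (1 - x) * C) ^ 2) := by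
    intro x hx
    rw [uIcc_of_le zero_le_one] at hx
    calc ∫ y in 0..(1 - x), 2 / (x * A + y * B + (1 - x - y) * C) ^ 3
        = ∫ y in 0..(1 - x), 2 / ((x * A + (1 - x) * C) + y * (B - C)) ^ 3 :=
          intervalIntegral.integral_congr fun y _ => by ring_nf
      _ = _ := by
          rw [integral_two_div_affine_cube (sub_nonneg.2 hx.2) fun y hy => by
            convert add_mul_add_mul_pos hA hB hC hx.1 hy.1 (by linarith [hy.2]) using 1; ring]
          ring
  rw [intervalIntegral.integral_congr hinner, intervalIntegral.integral_eq_sub_of_hasDerivAt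
    (fun x hx => hasDerivAt_feynman_outer hB.ne' hC.ne' (hpos x hx).1.ne' (hpos x hx).2.ne')
    (ContinuousOn.intervalIntegrable (ContinuousOn.div (by fun_prop) (by fun_prop)
      fun x hx => mul_ne_zero (pow_ne_zero 2 (hpos x hx).1.ne') (pow_ne_zero 2 (hpos x hx).2.ne')))]
  field_simp
  ring

end Feynman

def triangle : Set (ℝ × ℝ) := {b | 0 < b.1 ∧ 0 < b.2 ∧ b.1 + b.2 < 1}

lemma measurableSet_triangle : MeasurableSet triangle :=
  (measurableSet_lt measurable_const measurable_fst).inter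
    ((measurableSet_lt measurable_const measurable_snd).inter
      (measurableSet_lt (measurable_fst.add measurable_snd) measurable_const))

lemma triangle_subset : triangle ⊆ Ioo 0 1 ×ˢ Ioo 0 1 :=
  fun b ⟨h₁, h₂, h₁₂⟩ => ⟨⟨h₁, by linarith⟩, ⟨h₂, by linarith⟩⟩

lemma volume_triangle_lt_top : volume triangle < ⊤ :=
  (measure_mono triangle_subset).trans_lt <| by
    rw [Measure.volume_eq_prod, Measure.prod_prod]; simp

instance : IsFiniteMeasure (volume.restrict triangle) :=
  isFiniteMeasure_restrict.2 volume_triangle_lt_top.ne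

lemma integral_indicator_triangle_slice {E : Type*} [NormedAddCommGroup E] [NormedSpace ℝ E]
    (f : ℝ × ℝ → E) (x : ℝ) :
    ∫ y, triangle.indicator f (x, y) =
      (Ioo 0 1).indicator (fun x => ∫ y in 0..(1 - x), f (x, y)) x := by
  by_cases hx : x ∈ Ioo 0 1
  · rw [indicator_of_mem hx, intervalIntegral.integral_of_le (by linarith [hx.2]),
      integral_Ioc_eq_integral_Ioo, ← integral_indicator measurableSet_Ioo]
    congr 1 with y
    have hmem : (x, y) ∈ triangle ↔ y ∈ Ioo 0 (1 - x) := by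
      simp only [triangle, mem_ofPred_eq, mem_Ioo, hx.1, true_and, lt_sub_iff_add_lt']
    classical
    simp only [indicator_apply, hmem]
  · have hmem : ∀ y, (x, y) ∉ triangle := fun y ⟨h₁, _, h₁₂⟩ => hx ⟨h₁, by linarith⟩
    simp [hx, hmem]

lemma setIntegral_triangle {E : Type*} [NormedAddCommGroup E] [NormedSpace ℝ E]
    {f : ℝ × ℝ → E} (hf : IntegrableOn f triangle) :
    ∫ b in triangle, f b = ∫ x in 0..1, ∫ y in 0..(1 - x), f (x, y) := by
  rw [← integral_indicator measurableSet_triangle, Measure.volume_eq_prod,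
    integral_prod _ (by
      rw [← Measure.volume_eq_prod]; exact hf.integrable_indicator measurableSet_triangle)]
  simp_rw [integral_indicator_triangle_slice]
  rw [integral_indicator measurableSet_Ioo, intervalIntegral.integral_of_le zero_le_one,
    integral_Ioc_eq_integral_Ioo]

lemma mul_one_add_norm_sq_le {F : Type*} [SeminormedAddCommGroup F] {c : F} {R Δ₀ Δ : ℝ}
    (hc : ‖c‖ ≤ R) (hΔ₀ : 0 ≤ Δ₀) (hΔ : Δ₀ ≤ Δ) (q : F) :
    min 1 Δ₀ / (2 * (1 + R) ^ 2) * (1 + ‖q‖) ^ 2 ≤ ‖q - c‖ ^ 2 + Δ := by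
  set t := ‖q - c‖
  have hR : 0 ≤ R := (norm_nonneg c).trans hc
  have ht : 0 ≤ t := norm_nonneg _
  have hq : 1 + ‖q‖ ≤ (1 + R) * (1 + t) := by
    nlinarith [norm_sub_norm_le q c, mul_nonneg hR ht]
  have hm : min 1 Δ₀ * (1 + t ^ 2) ≤ t ^ 2 + Δ := by
    nlinarith [min_le_left 1 Δ₀, min_le_right 1 Δ₀, sq_nonneg t]
  calc min 1 Δ₀ / (2 * (1 + R) ^ 2) * (1 + ‖q‖) ^ 2
      ≤ min 1 Δ₀ / (2 * (1 + R) ^ 2) * ((1 + R) ^ 2 * (2 * (1 + t ^ 2))) := by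
        gcongr
        calc (1 + ‖q‖) ^ 2 ≤ ((1 + R) * (1 + t)) ^ 2 := by gcongr
          _ ≤ (1 + R) ^ 2 * (2 * (1 + t ^ 2)) := by
            rw [mul_pow]; gcongr; nlinarith [sq_nonneg (1 - t)]
    _ = min 1 Δ₀ * (1 + t ^ 2) := by field_simp
    _ ≤ t ^ 2 + Δ := hm

lemma abs_div_cube_le {a t ε D K : ℝ} (hε : 0 < ε) (ht : 0 < t) (ha : |a| ≤ K * t)
    (hD : ε * t ^ 2 ≤ D) : |a / D ^ 3| ≤ K / ε ^ 3 * t ^ (-5 : ℝ) := by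
  have hD0 : 0 < D := lt_of_lt_of_le (by positivity) hD
  rw [abs_div, abs_of_pos (pow_pos hD0 3), rpow_neg ht.le, show (5 : ℝ) = (5 : ℕ) by norm_num,
    rpow_natCast]
  calc |a| / D ^ 3 ≤ K * t / (ε * t ^ 2) ^ 3 := by
        gcongr
        exact (abs_nonneg a).trans ha
    _ = K / ε ^ 3 * (t ^ 5)⁻¹ := by field_simp

lemma abs_div_norm_sub_sq_add_cube_le {F : Type*} [SeminormedAddCommGroup F] {c q : F}
    {a R Δ₀ Δ K : ℝ} (hc : ‖c‖ ≤ R) (hΔ₀ : 0 < Δ₀) (hΔ : Δ₀ ≤ Δ) (ha : |a| ≤ K * (1 + ‖q‖)) :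
    |a / (‖q - c‖ ^ 2 + Δ) ^ 3| ≤
      K / (min 1 Δ₀ / (2 * (1 + R) ^ 2)) ^ 3 * (1 + ‖q‖) ^ (-5 : ℝ) := by
  have hR : 0 < 1 + R := by linarith [norm_nonneg c]
  exact abs_div_cube_le (div_pos (lt_min one_pos hΔ₀) (by positivity)) (by positivity) ha
    (mul_one_add_norm_sq_le hc hΔ₀.le hΔ q)

lemma abs_le_opNorm_mul_one_add_norm {F : Type*} [SeminormedAddCommGroup F] [NormedSpace ℝ F]
    (L : F →L[ℝ] ℝ) (q : F) : |L q| ≤ ‖L‖ * (1 + ‖q‖) := by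
  rw [← Real.norm_eq_abs]
  exact (L.le_opNorm q).trans (by gcongr; linarith)

lemma integral_Ioi_pow_three_div_sq_add_cube {Δ : ℝ} (hΔ : 0 < Δ) :
    ∫ y in Ioi (0 : ℝ), y ^ 3 / (y ^ 2 + Δ) ^ 3 = 1 / (4 * Δ) := by
  -- the antiderivative `y ^ 4 / (4 Δ (y ^ 2 + Δ) ^ 2)`, written so that its limit is visible
  have hderiv : ∀ y ∈ Ici (0 : ℝ),
      HasDerivAt (fun y => (1 - Δ / (y ^ 2 + Δ)) ^ 2 / (4 * Δ)) (y ^ 3 / (y ^ 2 + Δ) ^ 3) y := by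
    intro y _
    have hy : y ^ 2 + Δ ≠ 0 := by positivity
    refine ((((hasDerivAt_const y Δ).fun_div ((hasDerivAt_pow 2 y).add_const Δ) hy).const_sub 1
      |>.fun_pow 2).div_const (4 * Δ)).congr_deriv ?_
    simp only [Nat.cast_ofNat, zero_mul, zero_sub, pow_one, Nat.add_one_sub_one]
    field_simp
    ring
  have hlim : Tendsto (fun y => (1 - Δ / (y ^ 2 + Δ)) ^ 2 / (4 * Δ)) atTop (𝓝 (1 / (4 * Δ))) := by
    have h : Tendsto (fun y : ℝ => y ^ 2 + Δ) atTop atTop :=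
      tendsto_atTop_add_const_right _ Δ (tendsto_pow_atTop two_ne_zero)
    simpa using (((h.const_div_atTop Δ).const_sub 1).pow 2).div_const (4 * Δ)
  rw [integral_Ioi_of_hasDerivAt_of_nonneg' hderiv (fun y hy => by
    have : (0 : ℝ) < y := hy; positivity) hlim]
  simp [hΔ.ne']

section RadialIntegrals

variable {E : Type*} [NormedAddCommGroup E] [InnerProductSpace ℝ E] [FiniteDimensional ℝ E]
  [MeasurableSpace E] [BorelSpace E]

lemma integrable_div_norm_sub_sq_add_cube (hE : finrank ℝ E < 5) {f : E → ℝ}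
    (hf : Measurable f) {K : ℝ} (hfK : ∀ q, |f q| ≤ K * (1 + ‖q‖)) (c : E) {Δ : ℝ}
    (hΔ : 0 < Δ) : Integrable (fun q => f q / (‖q - c‖ ^ 2 + Δ) ^ 3) := by
  refine ((integrable_one_add_norm (r := 5) (by exact_mod_cast hE)).const_mul
    (K / (min 1 Δ / (2 * (1 + ‖c‖) ^ 2)) ^ 3)).mono'
    (hf.div (by fun_prop)).aestronglyMeasurable (Eventually.of_forall fun q => ?_)
  rw [Real.norm_eq_abs]
  exact abs_div_norm_sub_sq_add_cube_le le_rfl hΔ le_rfl (hfK q)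

lemma integrable_prod_div_norm_sub_sq_add_cube {α : Type*} [MeasurableSpace α] {ν : Measure α}
    [IsFiniteMeasure ν] (hE : finrank ℝ E < 5) {f : E → ℝ} (hf : Measurable f) {K : ℝ}
    (hfK : ∀ q, |f q| ≤ K * (1 + ‖q‖)) {c : α → E} (hc : Measurable c) {Δ : α → ℝ}
    (hΔ : Measurable Δ) {R Δ₀ : ℝ} (hΔ₀ : 0 < Δ₀) (hbound : ∀ᵐ b ∂ν, ‖c b‖ ≤ R ∧ Δ₀ ≤ Δ b) :
    Integrable (fun z : α × E => f z.2 / (‖z.2 - c z.1‖ ^ 2 + Δ z.1) ^ 3) (ν.prod volume) := by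
  refine ((integrable_const (K / (min 1 Δ₀ / (2 * (1 + R) ^ 2)) ^ 3)).mul_prod
    (integrable_one_add_norm (μ := volume) (r := 5) (by exact_mod_cast hE))).mono'
    ((hf.comp measurable_snd).div (by fun_prop)).aestronglyMeasurable ?_
  filter_upwards [Measure.quasiMeasurePreserving_fst.ae hbound] with z hz
  exact abs_div_norm_sub_sq_add_cube_le hz.1 hΔ₀ hz.2 (hfK z.2)

lemma integral_one_div_norm_sq_add_cube (hE : finrank ℝ E = 4) {Δ : ℝ} (hΔ : 0 < Δ) :
    ∫ q : E, 1 / (‖q‖ ^ 2 + Δ) ^ 3 = π ^ 2 / (2 * Δ) := by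
  have : Nontrivial E := Module.nontrivial_of_finrank_pos (R := ℝ) (by omega)
  rw [integral_fun_norm_addHaar volume (fun y => 1 / (y ^ 2 + Δ) ^ 3), measureReal_def,
    InnerProductSpace.volume_ball_of_dim_even (k := 2) hE, hE]
  simp_rw [smul_eq_mul, ← mul_div_assoc, mul_one]
  rw [show 4 - 1 = 3 from rfl, integral_Ioi_pow_three_div_sq_add_cube hΔ,
    ENNReal.toReal_mul, ENNReal.toReal_ofReal (by positivity)]
  norm_num [Nat.factorial]
  field_simp

lemma integral_div_norm_sq_add_cube_eq_zero (L : E →L[ℝ] ℝ) (Δ : ℝ) :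
    ∫ q : E, L q / (‖q‖ ^ 2 + Δ) ^ 3 = 0 := by
  have h := integral_neg_eq_self (fun q : E => L q / (‖q‖ ^ 2 + Δ) ^ 3) volume
  simp only [map_neg, norm_neg, neg_div, integral_neg] at h
  linarith

lemma integral_div_norm_sub_sq_add_cube (hE : finrank ℝ E = 4) (L : E →L[ℝ] ℝ) (c : E)
    {Δ : ℝ} (hΔ : 0 < Δ) :
    ∫ q : E, L q / (‖q - c‖ ^ 2 + Δ) ^ 3 = π ^ 2 / (2 * Δ) * L c := by
  have hE5 : finrank ℝ E < 5 := by omega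
  have hL : Integrable fun q : E => L q / (‖q‖ ^ 2 + Δ) ^ 3 := by
    simpa using integrable_div_norm_sub_sq_add_cube hE5 L.measurable
      (abs_le_opNorm_mul_one_add_norm L) 0 hΔ
  have h1 : Integrable fun q : E => L c * (1 / (‖q‖ ^ 2 + Δ) ^ 3) := by
    simpa using (integrable_div_norm_sub_sq_add_cube hE5 (measurable_const (a := (1 : ℝ)))
      (K := 1) (fun q => by simp) 0 hΔ).const_mul (L c)
  calc ∫ q : E, L q / (‖q - c‖ ^ 2 + Δ) ^ 3
      = ∫ q : E, (L q / (‖q‖ ^ 2 + Δ) ^ 3 + L c * (1 / (‖q‖ ^ 2 + Δ) ^ 3)) := by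
        rw [← integral_add_right_eq_self _ c]
        simp only [map_add, add_sub_cancel_right, add_div, mul_one_div]
    _ = π ^ 2 / (2 * Δ) * L c := by
        rw [integral_add hL h1, integral_div_norm_sq_add_cube_eq_zero, integral_const_mul,
          integral_one_div_norm_sq_add_cube hE hΔ]
        ring

end RadialIntegrals

section FeynmanParameters

variable {E : Type*} [NormedAddCommGroup E]

def feynmanDelta (M : ℝ) (k p : E) (b : ℝ × ℝ) : ℝ :=
  b.1 * b.2 * ‖k‖ ^ 2 + b.1 * (1 - b.1 - b.2) * ‖p‖ ^ 2 + b.2 * (1 - b.1 - b.2) * ‖k + p‖ ^ 2 +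
    M ^ 2

lemma sq_le_feynmanDelta (M : ℝ) (k p : E) {b : ℝ × ℝ} (hb : b ∈ triangle) :
    M ^ 2 ≤ feynmanDelta M k p b := by
  obtain ⟨h₁, h₂, h₁₂⟩ := hb
  have h₃ : 0 ≤ 1 - b.1 - b.2 := by linarith
  unfold feynmanDelta
  nlinarith [mul_nonneg (mul_pos h₁ h₂).le (sq_nonneg ‖k‖),
    mul_nonneg (mul_nonneg h₁.le h₃) (sq_nonneg ‖p‖),
    mul_nonneg (mul_nonneg h₂.le h₃) (sq_nonneg ‖k + p‖)]

variable [InnerProductSpace ℝ E]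

def feynmanShift (k p : E) (b : ℝ × ℝ) : E := b.2 • k - (1 - b.1 - b.2) • p

lemma norm_feynmanShift_le (k p : E) {b : ℝ × ℝ} (hb : b ∈ triangle) :
    ‖feynmanShift k p b‖ ≤ ‖k‖ + ‖p‖ := by
  obtain ⟨h₁, h₂, h₁₂⟩ := hb
  calc ‖feynmanShift k p b‖ ≤ ‖b.2 • k‖ + ‖(1 - b.1 - b.2) • p‖ := norm_sub_le _ _
    _ = b.2 * ‖k‖ + (1 - b.1 - b.2) * ‖p‖ := by
      rw [norm_smul, norm_smul, Real.norm_of_nonneg h₂.le, Real.norm_of_nonneg (by linarith)]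
    _ ≤ ‖k‖ + ‖p‖ := add_le_add (mul_le_of_le_one_left (norm_nonneg _) (by linarith))
      (mul_le_of_le_one_left (norm_nonneg _) (by linarith))

lemma feynman_denominator_eq (M x y : ℝ) (q k p : E) :
    x * (‖q‖ ^ 2 + M ^ 2) + y * (‖q - k‖ ^ 2 + M ^ 2) + (1 - x - y) * (‖q + p‖ ^ 2 + M ^ 2) =
      ‖q - feynmanShift k p (x, y)‖ ^ 2 + feynmanDelta M k p (x, y) := by
  simp only [feynmanShift, feynmanDelta, ← real_inner_self_eq_norm_sq, inner_sub_left,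
    inner_sub_right, inner_add_left, inner_add_right, real_inner_smul_left, real_inner_smul_right]
  rw [real_inner_comm q k, real_inner_comm q p, real_inner_comm k p]
  ring

lemma setIntegral_triangle_feynman {M : ℝ} (hM : M ≠ 0) (a : ℝ) (q k p : E)
    (h : IntegrableOn
      (fun b => 2 * a / (‖q - feynmanShift k p b‖ ^ 2 + feynmanDelta M k p b) ^ 3) triangle) :
    ∫ b in triangle, 2 * a / (‖q - feynmanShift k p b‖ ^ 2 + feynmanDelta M k p b) ^ 3 =
      a / ((‖q‖ ^ 2 + M ^ 2) * (‖q - k‖ ^ 2 + M ^ 2) * (‖q + p‖ ^ 2 + M ^ 2)) := by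
  rw [setIntegral_triangle h]
  simp_rw [← feynman_denominator_eq, mul_comm (2 : ℝ) a, mul_div_assoc,
    intervalIntegral.integral_const_mul]
  rw [integral_feynman_three (by positivity) (by positivity) (by positivity), mul_one_div]

variable [FiniteDimensional ℝ E] [MeasurableSpace E] [BorelSpace E]

lemma integrable_feynman_integrand (hE : finrank ℝ E < 5) (L : E →L[ℝ] ℝ) {M : ℝ} (hM : M ≠ 0)
    (k p : E) :
    Integrable (fun z : (ℝ × ℝ) × E =>
        2 * L z.2 / (‖z.2 - feynmanShift k p z.1‖ ^ 2 + feynmanDelta M k p z.1) ^ 3)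
      ((volume.restrict triangle).prod volume) := by
  refine integrable_prod_div_norm_sub_sq_add_cube hE (f := fun q => 2 * L q) (K := 2 * ‖L‖)
    (R := ‖k‖ + ‖p‖) (by fun_prop) (fun q => ?_) (by unfold feynmanShift; fun_prop)
    (by unfold feynmanDelta; fun_prop) (by positivity : 0 < M ^ 2) ?_
  · rw [abs_mul, abs_two, mul_assoc]
    exact mul_le_mul_of_nonneg_left (abs_le_opNorm_mul_one_add_norm L q) zero_le_two
  · filter_upwards [ae_restrict_mem measurableSet_triangle] with b hb
    exact ⟨norm_feynmanShift_le k p hb, sq_le_feynmanDelta M k p hb⟩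

theorem integral_three_propagators (hE : finrank ℝ E = 4) (L : E →L[ℝ] ℝ) {M : ℝ} (hM : M ≠ 0)
    (k p : E) :
    Integrable (fun q : E =>
      L q / ((‖q‖ ^ 2 + M ^ 2) * (‖q - k‖ ^ 2 + M ^ 2) * (‖q + p‖ ^ 2 + M ^ 2))) ∧
    ∫ q : E, L q / ((‖q‖ ^ 2 + M ^ 2) * (‖q - k‖ ^ 2 + M ^ 2) * (‖q + p‖ ^ 2 + M ^ 2)) =
      π ^ 2 * ∫ β₁ in (0 : ℝ)..1, ∫ β₂ in (0 : ℝ)..(1 - β₁),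
        L (β₂ • k - (1 - β₁ - β₂) • p) /
          (β₁ * β₂ * ‖k‖ ^ 2 + β₁ * (1 - β₁ - β₂) * ‖p‖ ^ 2 +
            β₂ * (1 - β₁ - β₂) * ‖k + p‖ ^ 2 + M ^ 2) := by
  set F := fun z : (ℝ × ℝ) × E =>
    2 * L z.2 / (‖z.2 - feynmanShift k p z.1‖ ^ 2 + feynmanDelta M k p z.1) ^ 3
  have hF : Integrable F ((volume.restrict triangle).prod volume) :=
    integrable_feynman_integrand (by omega) L hM k p
  have hslice : ∀ᵐ q ∂volume, ∫ b in triangle, F (b, q) =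
      L q / ((‖q‖ ^ 2 + M ^ 2) * (‖q - k‖ ^ 2 + M ^ 2) * (‖q + p‖ ^ 2 + M ^ 2)) :=
    hF.prod_left_ae.mono fun q hq => setIntegral_triangle_feynman hM (L q) q k p hq
  have hfiber : ∀ b ∈ triangle,
      ∫ q, F (b, q) = π ^ 2 * (L (feynmanShift k p b) / feynmanDelta M k p b) := fun b hb => by
    have hΔ : 0 < feynmanDelta M k p b := (by positivity : 0 < M ^ 2).trans_le
      (sq_le_feynmanDelta M k p hb)
    simp only [F, mul_div_assoc, integral_const_mul,
      integral_div_norm_sub_sq_add_cube hE L _ hΔ]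
    field_simp
  have hrhs : IntegrableOn (fun b => L (feynmanShift k p b) / feynmanDelta M k p b) triangle :=
    (integrable_const_mul_iff (isUnit_iff_ne_zero.2 (by positivity : π ^ 2 ≠ 0)) _).1
      (hF.integral_prod_left.congr (ae_restrict_of_forall_mem measurableSet_triangle hfiber))
  refine ⟨hF.integral_prod_right.congr hslice, ?_⟩
  calc _ = ∫ q, ∫ b in triangle, F (b, q) := integral_congr_ae (hslice.mono fun q hq => hq.symm)
    _ = ∫ b in triangle, ∫ q, F (b, q) := (integral_integral_swap hF).symm
    _ = ∫ b in triangle, π ^ 2 * (L (feynmanShift k p b) / feynmanDelta M k p b) :=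
      setIntegral_congr_fun measurableSet_triangle hfiber
    _ = _ := by rw [integral_const_mul, setIntegral_triangle hrhs]; rfl

end FeynmanParameters

/-- Identity (int-q5): the three-propagator integral with factor `q_μ`,
in Feynman parametrization. -/
theorem integral_three_propagators_coord (M : ℝ) (hM : 0 < M)
    (k p : EuclideanSpace ℝ (Fin 4)) (μ : Fin 4) :
    Integrable (fun q : EuclideanSpace ℝ (Fin 4) =>
      q μ / ((‖q‖ ^ 2 + M ^ 2) * (‖q - k‖ ^ 2 + M ^ 2) * (‖q + p‖ ^ 2 + M ^ 2))) ∧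
    ∫ q : EuclideanSpace ℝ (Fin 4),
        q μ / ((‖q‖ ^ 2 + M ^ 2) * (‖q - k‖ ^ 2 + M ^ 2) * (‖q + p‖ ^ 2 + M ^ 2)) =
      π ^ 2 * ∫ β₁ in (0 : ℝ)..1, ∫ β₂ in (0 : ℝ)..(1 - β₁),
        (β₂ • k - (1 - β₁ - β₂) • p) μ /
          (β₁ * β₂ * ‖k‖ ^ 2 + β₁ * (1 - β₁ - β₂) * ‖p‖ ^ 2 +
            β₂ * (1 - β₁ - β₂) * ‖k + p‖ ^ 2 + M ^ 2) :=
  integral_three_propagators finrank_euclideanSpace_fin (EuclideanSpace.proj μ) hM.ne' k p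
end
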